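/- Let X be a Banach space, A, A₀ closed invertible operators with the same domain, and suppose (i) ‖e^{−σA}‖_{L(X, D(A))} ≤ M₀ σ^{−1} e^{−ωσ} for σ > 0 (where D(A) carries the graph norm), (ii) ‖(A − A₀)x‖_X ≤ η‖x‖_{D(A₀)} with η ≥ 0, and (iii) A e^{−σA} − A e^{−σA₀} decomposes as A e^{−σ/2·A}(e^{−σ/2·A} − e^{−σ/2·A₀}) + e^{−σ/2·A}(A − A₀)e^{−σ/2·A₀} + (e^{−σ/2·A} − e^{−σ/2·A₀})A₀e^{−σ/2·A₀} + (A₀ − A)e^{−σA₀}. Then ‖e^{−σA} − e^{−σA₀}‖_{L(X, D(A))} is controlled by ‖e^{−σ/2 A} − e^{−σ/2 A₀}‖_{L(X)}, η, and the smoothing constants; in particular if ‖e^{−sA_ε} − e^{−sA₀}‖_{L(X)} → 0 uniformly on compacts and ‖(A_ε − A₀)A₀⁻¹‖ → 0 as ε → 0⁺, then ‖e^{−σA_ε} − e^{−σA₀}‖_{L(X, D(A₀))} → 0 for each σ > 0. -/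

import Mathlib

open Filter

open scoped Topology

/-!
Every summand of the half-step decomposition is a product of a factor tending to `0` in operator
norm (`S_ε - S₀` at `σ/2`, or `A_ε - A₀`) and a factor bounded uniformly in `ε` (the smoothing
estimate, and `‖A_ε‖ → ‖A₀‖`), so `A_ε T_ε(σ) - A_ε T₀(σ) → 0`. Trading `A_ε` for `A₀` costs
`(A_ε - A₀)` times bounded terms, so also `A₀ (T_ε(σ) - T₀(σ)) → 0`, while the `X`-component
`ι (T_ε(σ) - T₀(σ)) = S_ε(σ) - S₀(σ)` tends to `0` by hypothesis; the graph norm on `D` controls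
both together.
-/

section Composition

variable {𝕜 E F G α : Type*} [NontriviallyNormedField 𝕜]
  [NormedAddCommGroup E] [NormedSpace 𝕜 E] [NormedAddCommGroup F] [NormedSpace 𝕜 F]
  [NormedAddCommGroup G] [NormedSpace 𝕜 G] {l : Filter α}

theorem Filter.Tendsto.zero_comp_isBoundedUnder_le {f : α → F →L[𝕜] G} {g : α → E →L[𝕜] F}
    (hf : Tendsto f l (𝓝 0)) (hg : IsBoundedUnder (· ≤ ·) l (Norm.norm ∘ g)) :
    Tendsto (fun a => (f a).comp (g a)) l (𝓝 0) :=
  hf.op_zero_isBoundedUnder_le hg _ ContinuousLinearMap.opNorm_comp_le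

theorem Filter.IsBoundedUnder.comp_tendsto_zero {f : α → F →L[𝕜] G} {g : α → E →L[𝕜] F}
    (hf : IsBoundedUnder (· ≤ ·) l (norm ∘ f)) (hg : Tendsto g l (𝓝 0)) :
    Tendsto (fun a => (f a).comp (g a)) l (𝓝 0) :=
  hg.op_zero_isBoundedUnder_le hf (flip ContinuousLinearMap.comp) fun x y =>
    (ContinuousLinearMap.opNorm_comp_le y x).trans_eq (mul_comm _ _)

theorem Filter.IsBoundedUnder.clm_comp {f : α → F →L[𝕜] G} {g : α → E →L[𝕜] F}
    (hf : IsBoundedUnder (· ≤ ·) l (norm ∘ f)) (hg : IsBoundedUnder (· ≤ ·) l (norm ∘ g)) :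
    IsBoundedUnder (· ≤ ·) l (norm ∘ fun a => (f a).comp (g a)) := by
  obtain ⟨b, hb⟩ := hf
  obtain ⟨c, hc⟩ := hg
  refine ⟨b * c, eventually_map.mpr ?_⟩
  filter_upwards [eventually_map.mp hb, eventually_map.mp hc] with a hfa hga
  exact (ContinuousLinearMap.opNorm_comp_le _ _).trans
    (mul_le_mul hfa hga (norm_nonneg _) ((norm_nonneg _).trans hfa))

end Composition

section GraphNorm

variable {𝕜 X D E α : Type*} [NontriviallyNormedField 𝕜]
  [NormedAddCommGroup X] [NormedSpace 𝕜 X] [NormedAddCommGroup D] [NormedSpace 𝕜 D]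
  [NormedAddCommGroup E] [NormedSpace 𝕜 E] {ι B : D →L[𝕜] X}

theorem ContinuousLinearMap.opNorm_le_of_graph_norm (hgraph : ∀ x, ‖x‖ ≤ ‖ι x‖ + ‖B x‖)
    (R : E →L[𝕜] D) : ‖R‖ ≤ ‖ι.comp R‖ + ‖B.comp R‖ :=
  R.opNorm_le_bound (by positivity) fun x =>
    calc ‖R x‖ ≤ ‖ι.comp R x‖ + ‖B.comp R x‖ := hgraph (R x)
      _ ≤ ‖ι.comp R‖ * ‖x‖ + ‖B.comp R‖ * ‖x‖ := by gcongr <;> exact le_opNorm _ _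
      _ = (‖ι.comp R‖ + ‖B.comp R‖) * ‖x‖ := (add_mul _ _ _).symm

theorem ContinuousLinearMap.tendsto_zero_of_graph_norm (hgraph : ∀ x, ‖x‖ ≤ ‖ι x‖ + ‖B x‖)
    {R : α → E →L[𝕜] D} {l : Filter α} (hι : Tendsto (fun a => ι.comp (R a)) l (𝓝 0))
    (hB : Tendsto (fun a => B.comp (R a)) l (𝓝 0)) : Tendsto R l (𝓝 0) := by
  refine squeeze_zero_norm (fun a => opNorm_le_of_graph_norm hgraph (R a)) ?_
  simpa only [norm_zero, add_zero] using hι.norm.add hB.norm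

end GraphNorm

section Perturbation

variable {X D α : Type*} [NormedAddCommGroup X] [NormedSpace ℝ X]
  [NormedAddCommGroup D] [NormedSpace ℝ D] {l : Filter α}
  {A : α → D →L[ℝ] X} {A₀ : D →L[ℝ] X}

theorem tendsto_halfStep_decomposition_zero {S : α → X →L[ℝ] X} {S₀ : X →L[ℝ] X}
    {T : α → X →L[ℝ] D} (T₀ T₀' : X →L[ℝ] D)
    (hA : Tendsto (fun a => A a - A₀) l (𝓝 0)) (hS : Tendsto (fun a => S a - S₀) l (𝓝 0))
    (hT : IsBoundedUnder (· ≤ ·) l (norm ∘ T)) :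
    Tendsto (fun a => ((A a).comp (T a)).comp (S a - S₀) + (S a).comp ((A a - A₀).comp T₀)
      + (S a - S₀).comp (A₀.comp T₀) + (A₀ - A a).comp T₀') l (𝓝 0) := by
  have hAbdd : IsBoundedUnder (· ≤ ·) l (norm ∘ A) :=
    (tendsto_sub_nhds_zero_iff.mp hA).norm.isBoundedUnder_le
  have hSbdd : IsBoundedUnder (· ≤ ·) l (norm ∘ S) :=
    (tendsto_sub_nhds_zero_iff.mp hS).norm.isBoundedUnder_le
  have hA' : Tendsto (fun a => A₀ - A a) l (𝓝 0) := by
    simpa only [neg_sub, neg_zero] using hA.neg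
  have h₁ := (hAbdd.clm_comp hT).comp_tendsto_zero hS
  have h₂ := hSbdd.comp_tendsto_zero
    (hA.zero_comp_isBoundedUnder_le (g := fun _ => T₀) isBoundedUnder_const)
  have h₃ := hS.zero_comp_isBoundedUnder_le (g := fun _ => A₀.comp T₀) isBoundedUnder_const
  have h₄ := hA'.zero_comp_isBoundedUnder_le (g := fun _ => T₀') isBoundedUnder_const
  simpa only [add_zero] using ((h₁.add h₂).add h₃).add h₄

theorem tendsto_comp_sub_zero_of_tendsto_comp_sub_comp {T : α → X →L[ℝ] D} {T₀ : X →L[ℝ] D}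
    (hA : Tendsto (fun a => A a - A₀) l (𝓝 0)) (hT : IsBoundedUnder (· ≤ ·) l (norm ∘ T))
    (hcross : Tendsto (fun a => (A a).comp (T a) - (A a).comp T₀) l (𝓝 0)) :
    Tendsto (fun a => A₀.comp (T a - T₀)) l (𝓝 0) := by
  have hA' : Tendsto (fun a => A₀ - A a) l (𝓝 0) := by
    simpa only [neg_sub, neg_zero] using hA.neg
  have hsplit : ∀ a, A₀.comp (T a - T₀) =
      (A₀ - A a).comp (T a) + ((A a).comp (T a) - (A a).comp T₀) + (A a - A₀).comp T₀ := by
    intro a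
    simp only [ContinuousLinearMap.comp_sub, ContinuousLinearMap.sub_comp]
    abel
  simpa only [hsplit, add_zero] using ((hA'.zero_comp_isBoundedUnder_le hT).add hcross).add
    (hA.zero_comp_isBoundedUnder_le (g := fun _ => T₀) isBoundedUnder_const)

end Perturbation

/-- `S ε σ` is `e^{-σA_ε}` in `L(X)` and `T ε σ` the same operator in `L(X, D)`, where `D` is the
common domain with the graph norm of `A₀ = A 0` and `ι : D → X` the inclusion;
`‖(A_ε - A₀)A₀⁻¹‖_{L(X)} → 0` is encoded as `‖A_ε - A₀‖_{L(D,X)} → 0`. -/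
theorem stmt14_general {X D : Type*} [NormedAddCommGroup X] [NormedSpace ℝ X]
    [NormedAddCommGroup D] [NormedSpace ℝ D]
    (ι : D →L[ℝ] X)
    (A : ℝ → (D →L[ℝ] X))
    (S : ℝ → ℝ → (X →L[ℝ] X))
    (T : ℝ → ℝ → (X →L[ℝ] D))
    (M₀ ω : ℝ)
    (hιT : ∀ ε σ, 0 < σ → ι.comp (T ε σ) = S ε σ)
    (hsmooth : ∀ ε σ, 0 < σ → ‖T ε σ‖ ≤ M₀ / σ * Real.exp (-ω * σ))
    (hgraph : ∀ x : D, ‖x‖ ≤ ‖ι x‖ + ‖A 0 x‖)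
    (hdecomp : ∀ ε σ, 0 < σ →
      (A ε).comp (T ε σ) - (A ε).comp (T 0 σ) =
        ((A ε).comp (T ε (σ / 2))).comp (S ε (σ / 2) - S 0 (σ / 2))
          + (S ε (σ / 2)).comp ((A ε - A 0).comp (T 0 (σ / 2)))
          + (S ε (σ / 2) - S 0 (σ / 2)).comp ((A 0).comp (T 0 (σ / 2)))
          + (A 0 - A ε).comp (T 0 σ))
    (hSconv : ∀ K : Set ℝ, IsCompact K → K ⊆ Set.Ioi (0 : ℝ) →
      TendstoUniformlyOn (fun ε σ => S ε σ) (fun σ => S 0 σ)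
        (nhdsWithin 0 (Set.Ioi (0 : ℝ))) K)
    (hAconv : Tendsto (fun ε => ‖A ε - A 0‖)
      (nhdsWithin 0 (Set.Ioi (0 : ℝ))) (nhds 0)) :
    ∀ σ : ℝ, 0 < σ →
      Tendsto (fun ε => ‖T ε σ - T 0 σ‖)
        (nhdsWithin 0 (Set.Ioi (0 : ℝ))) (nhds 0) := by
  intro σ hσ
  have hA := tendsto_zero_iff_norm_tendsto_zero.mpr hAconv
  have hS : ∀ s, 0 < s → Tendsto (fun ε => S ε s - S 0 s) (𝓝[>] 0) (𝓝 0) :=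
    fun s hs => tendsto_sub_nhds_zero_iff.mpr <| tendstoUniformlyOn_singleton_iff_tendsto.mp <|
      hSconv {s} isCompact_singleton (Set.singleton_subset_iff.mpr hs)
  have hT : ∀ s, 0 < s → IsBoundedUnder (· ≤ ·) (𝓝[>] 0)
      (norm ∘ fun ε => T ε s) := fun s hs => isBoundedUnder_of ⟨_, fun ε => hsmooth ε s hs⟩
  have hcross : Tendsto (fun ε => (A ε).comp (T ε σ) - (A ε).comp (T 0 σ))
      (𝓝[>] 0) (𝓝 0) := by
    simpa only [hdecomp _ σ hσ] using tendsto_halfStep_decomposition_zero (T 0 (σ / 2)) (T 0 σ)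
      hA (hS _ (half_pos hσ)) (hT _ (half_pos hσ))
  refine tendsto_zero_iff_norm_tendsto_zero.mp <| ContinuousLinearMap.tendsto_zero_of_graph_norm
    hgraph ?_ (tendsto_comp_sub_zero_of_tendsto_comp_sub_comp hA (hT σ hσ) hcross)
  simpa only [ContinuousLinearMap.comp_sub, hιT _ σ hσ] using hS σ hσ

/-- Abstract version of Lemma 5.2: `X` is the base Banach space, `D` the common domain
(with graph norm, so `‖x‖_D` is controlled by `‖ιx‖ + ‖A₀x‖`), `ι : D → X` the embedding,
`A ε : D → X` the (bounded from the domain) operators `A_ε`, `S ε σ = e^{-σA_ε}` in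
`L(X)` and `T ε σ = e^{-σA_ε}` viewed in `L(X, D)`.  Assume:
(i) the uniform smoothing estimate `‖e^{-σA_ε}‖_{L(X,D)} ≤ M₀ σ^{-1} e^{-ωσ}`;
(iii) the algebraic decomposition of `A_ε e^{-σA_ε} - A_ε e^{-σA₀}`.
Then, if `‖e^{-sA_ε} - e^{-sA₀}‖_{L(X)} → 0` uniformly on compact subsets of `(0,∞)` and
`‖(A_ε - A₀)A₀⁻¹‖ → 0` (encoded as `‖A_ε - A₀‖_{L(D,X)} → 0`) as `ε → 0⁺`, then
`‖e^{-σA_ε} - e^{-σA₀}‖_{L(X,D)} → 0` for each `σ > 0`. -/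
theorem stmt14 {X D : Type*} [NormedAddCommGroup X] [NormedSpace ℝ X] [CompleteSpace X]
    [NormedAddCommGroup D] [NormedSpace ℝ D] [CompleteSpace D]
    (ι : D →L[ℝ] X)
    (A : ℝ → (D →L[ℝ] X))
    (S : ℝ → ℝ → (X →L[ℝ] X))
    (T : ℝ → ℝ → (X →L[ℝ] D))
    (M₀ ω : ℝ) (hM₀ : 0 < M₀) (hω : 0 < ω)
    (hιT : ∀ ε σ, 0 < σ → ι.comp (T ε σ) = S ε σ)
    (hsmooth : ∀ ε σ, 0 < σ → ‖T ε σ‖ ≤ M₀ / σ * Real.exp (-ω * σ))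
    (hgraph : ∀ x : D, ‖x‖ ≤ ‖ι x‖ + ‖A 0 x‖)
    (hdecomp : ∀ ε σ, 0 < σ →
      (A ε).comp (T ε σ) - (A ε).comp (T 0 σ) =
        ((A ε).comp (T ε (σ / 2))).comp (S ε (σ / 2) - S 0 (σ / 2))
          + (S ε (σ / 2)).comp ((A ε - A 0).comp (T 0 (σ / 2)))
          + (S ε (σ / 2) - S 0 (σ / 2)).comp ((A 0).comp (T 0 (σ / 2)))
          + (A 0 - A ε).comp (T 0 σ))
    (hSconv : ∀ K : Set ℝ, IsCompact K → K ⊆ Set.Ioi (0 : ℝ) →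
      TendstoUniformlyOn (fun ε σ => S ε σ) (fun σ => S 0 σ)
        (nhdsWithin 0 (Set.Ioi (0 : ℝ))) K)
    (hAconv : Tendsto (fun ε => ‖A ε - A 0‖)
      (nhdsWithin 0 (Set.Ioi (0 : ℝ))) (nhds 0)) :
    ∀ σ : ℝ, 0 < σ →
      Tendsto (fun ε => ‖T ε σ - T 0 σ‖)
        (nhdsWithin 0 (Set.Ioi (0 : ℝ))) (nhds 0) :=
  stmt14_general ι A S T M₀ ω hιT hsmooth hgraph hdecomp hSconv hAconv
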